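/- Fix N ≥ 2, K > 0, A > 0, ω ∈ ℝ^N, T > 0, ā ∈ [0, A], and α ∈ ℝ^N. For each ε > 0 let a^ε : [0,T] → ℝ^{N×N} be measurable with a^ε(t) symmetric and 0 ≤ a^ε_{ij}(t) ≤ A for all i, j, t, and let θ^ε : [0,T] → ℝ^N be continuous and satisfy the integral equation θ^ε_i(t) = α_i + ∫_0^t [ω_i + (K/N)·∑_{j=1}^N a^ε_{ij}(s)·sin(θ^ε_j(s) − θ^ε_i(s))] ds for all t ∈ [0,T] and all i. Let θ̄ : [0,T] → ℝ^N be the solution of the averaged system dθ̄_i/dt = ω_i + (K/N)·∑_{j=1}^N ā·sin(θ̄_j − θ̄_i) with θ̄(0) = α. If for all i, j one has sup_{t∈[0,T]} |∫_0^t (a^ε_{ij}(s) − ā) ds| → 0 as ε → 0, then sup_{t∈[0,T]} max_i |θ^ε_i(t) − θ̄_i(t)| → 0 as ε → 0. -/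

import Mathlib

/-!
Write `θ^ε - θ̄` through the integral equations. Its integrand splits into a part that is
Lipschitz in `θ^ε - θ̄`, with constant `2KA`, and the oscillating remainder
`(K/N) ∑ⱼ (a^ε_ij - ā) sin(θ̄_j - θ̄_i)`. Since `θ̄` is Lipschitz, an integration by parts bounds
the integral of the remainder by a constant times `sup_t |∫₀ᵗ (a^ε_ij - ā)|`, and Grönwall's
inequality in integral form then makes `‖θ^ε(t) - θ̄(t)‖` uniformly small on `[0, T]`.
-/

open Real MeasureTheory intervalIntegral
open Set Filter Topology

theorem abs_integral_mul_le_of_abs_primitive_le {b g g' : ℝ → ℝ} {a t δ M : ℝ} (hat : a ≤ t)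
    (hb : IntervalIntegrable b volume a t)
    (hg : ∀ s ∈ Icc a t, HasDerivAt g (g' s) s) (hg' : ∀ s ∈ Icc a t, |g' s| ≤ M)
    (hδ : ∀ s ∈ Icc a t, |∫ u in a..s, b u| ≤ δ) :
    |∫ s in a..t, b s * g s| ≤ δ * (|g t| + M * (t - a)) := by
  set F : ℝ → ℝ := fun x => ∫ u in a..x, b u
  have hM : 0 ≤ M := (abs_nonneg _).trans (hg' t ⟨hat, le_rfl⟩)
  have hF : AbsolutelyContinuousOnInterval F a t :=
    hb.absolutelyContinuousOnInterval_intervalIntegral left_mem_uIcc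
  have hgL : LipschitzOnWith M.toNNReal g (uIcc a t) := by
    rw [uIcc_of_le hat]
    refine (convex_Icc a t).lipschitzOnWith_of_nnnorm_hasDerivWithin_le
      (fun s hs => (hg s hs).hasDerivWithinAt) fun s hs => ?_
    rw [← NNReal.coe_le_coe, coe_nnnorm, Real.coe_toNNReal _ hM]
    exact hg' s hs
  have hderivF : ∀ᵐ s, s ∈ uIoc a t → deriv F s = b s := by
    filter_upwards [hb.ae_hasDerivAt_integral] with s hs hst
    exact (hs (uIoc_subset_uIcc hst) a left_mem_uIcc).deriv
  have hparts := hF.integral_mul_deriv_eq_deriv_mul hgL.absolutelyContinuousOnInterval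
  have hbg : ∫ s in a..t, b s * g s = F t * g t - ∫ s in a..t, F s * deriv g s := by
    have hFa : F a = 0 := integral_same
    rw [hparts, hFa, zero_mul, sub_zero, sub_sub_cancel]
    refine integral_congr_ae ?_
    filter_upwards [hderivF] with s hs hst
    rw [hs hst]
  have hrest : |∫ s in a..t, F s * deriv g s| ≤ δ * M * (t - a) := by
    have := norm_integral_le_of_norm_le_const (a := a) (b := t) (f := fun s => F s * deriv g s)
      (C := δ * M) fun s hs => by
        rw [uIoc_of_le hat] at hs
        have hs' : s ∈ Icc a t := Ioc_subset_Icc_self hs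
        rw [Real.norm_eq_abs, abs_mul, (hg s hs').deriv]
        exact mul_le_mul (hδ s hs') (hg' s hs') (abs_nonneg _)
          ((abs_nonneg _).trans (hδ s hs'))
    rwa [Real.norm_eq_abs, abs_of_nonneg (sub_nonneg.2 hat)] at this
  calc |∫ s in a..t, b s * g s|
      ≤ |F t| * |g t| + |∫ s in a..t, F s * deriv g s| := by
        rw [hbg, ← abs_mul]; exact abs_sub _ _
    _ ≤ δ * |g t| + δ * M * (t - a) := by
        gcongr
        exact hδ t ⟨hat, le_rfl⟩
    _ = δ * (|g t| + M * (t - a)) := by ring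

theorem le_mul_exp_of_le_add_mul_integral {u : ℝ → ℝ} {a b c L : ℝ}
    (hu : ContinuousOn u (Icc a b)) (hL : 0 ≤ L)
    (h : ∀ t ∈ Icc a b, u t ≤ c + L * ∫ s in a..t, u s) :
    ∀ t ∈ Icc a b, u t ≤ c * exp (L * (t - a)) := by
  intro t ht
  have hab : a ≤ b := ht.1.trans ht.2
  set W : ℝ → ℝ := fun x => ∫ s in a..x, u s
  have hWc : ContinuousOn W (Icc a b) := by
    simpa [uIcc_of_le hab] using
      continuousOn_primitive_interval' (hu.intervalIntegrable_of_Icc hab) left_mem_uIcc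
  have hW' : ∀ x ∈ Ico a b, HasDerivWithinAt W (u x) (Ici x) x := by
    intro x hx
    have : Fact (x ∈ Icc a b) := ⟨Ico_subset_Icc_self hx⟩
    have hint : IntervalIntegrable u volume a x :=
      (hu.mono (Icc_subset_Icc_right hx.2.le)).intervalIntegrable_of_Icc hx.1
    refine (integral_hasDerivWithinAt_right (s := Icc a b) hint
      (hu.stronglyMeasurableAtFilter_nhdsWithin measurableSet_Icc x)
      (hu x (Ico_subset_Icc_self hx))).mono_of_mem_nhdsWithin ?_
    exact mem_of_superset (Icc_mem_nhdsGE hx.2) (Icc_subset_Icc_left hx.1)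
  have hWle : W t ≤ gronwallBound 0 L c (t - a) :=
    le_gronwallBound_of_liminf_deriv_right_le hWc
      (fun x hx _ hr => (hW' x hx).liminf_right_slope_le hr)
      (by simp [W]) (fun x hx => by linarith [h x (Ico_subset_Icc_self hx)]) t ht
  rcases hL.eq_or_lt with rfl | hL
  · simpa using h t ht
  rw [gronwallBound_of_K_ne_0 hL.ne'] at hWle
  calc u t ≤ c + L * W t := h t ht
    _ ≤ c + L * (0 * exp (L * (t - a)) + c / L * (exp (L * (t - a)) - 1)) := by gcongr
    _ = c * exp (L * (t - a)) := by field_simp; ring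

theorem abs_div_mul_sum_le {N : ℕ} [NeZero N] {K m : ℝ} {x : Fin N → ℝ} (hK : 0 ≤ K)
    (hx : ∀ j, |x j| ≤ m) : |K / N * ∑ j, x j| ≤ K * m := by
  have hsum : |∑ j, x j| ≤ N * m := by
    simpa using (Finset.abs_sum_le_sum_abs x Finset.univ).trans
      (Finset.sum_le_card_nsmul _ _ m fun j _ => hx j)
  have hN : (N : ℝ) ≠ 0 := NeZero.ne _
  rw [abs_mul, abs_of_nonneg (by positivity)]
  calc K / N * |∑ j, x j| ≤ K / N * (N * m) := by gcongr
    _ = K * m := by field_simp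

theorem intervalIntegrable_of_abs_le {f : ℝ → ℝ} {a b C : ℝ} (hab : a ≤ b) (hf : Measurable f)
    (hC : ∀ s ∈ Icc a b, |f s| ≤ C) : IntervalIntegrable f volume a b :=
  (intervalIntegrable_iff_integrableOn_Icc_of_le hab).2 <|
    IntegrableOn.of_bound measure_Icc_lt_top hf.aestronglyMeasurable C <|
      (ae_restrict_iff' measurableSet_Icc).2 <| Eventually.of_forall hC

noncomputable def kuramotoField {N : ℕ} (ω : Fin N → ℝ) (K : ℝ) (a : Fin N → Fin N → ℝ)
    (x : Fin N → ℝ) (i : Fin N) : ℝ :=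
  ω i + K / N * ∑ j, a i j * sin (x j - x i)

section KuramotoField

variable {N : ℕ} {ω : Fin N → ℝ} {K A : ℝ} {a c : Fin N → Fin N → ℝ} {x y : Fin N → ℝ}
  {i : Fin N}

theorem kuramotoField_sub_kuramotoField_left :
    kuramotoField ω K a x i - kuramotoField ω K c x i =
      K / N * ∑ j, (a i j - c i j) * sin (x j - x i) := by
  simp only [kuramotoField, sub_mul, Finset.sum_sub_distrib]; ring

variable [NeZero N]

theorem abs_kuramotoField_le (hK : 0 ≤ K) (ha : ∀ j, |a i j| ≤ A) :
    |kuramotoField ω K a x i| ≤ ‖ω‖ + K * A := by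
  refine (abs_add_le _ _).trans (add_le_add ?_ (abs_div_mul_sum_le hK fun j => ?_))
  · simpa using norm_le_pi_norm ω i
  · rw [abs_mul]
    simpa using mul_le_mul (ha j) (abs_sin_le_one _) (abs_nonneg _) ((abs_nonneg _).trans (ha i))

theorem abs_kuramotoField_sub_le (hK : 0 ≤ K) (ha : ∀ j, |a i j| ≤ A) :
    |kuramotoField ω K a x i - kuramotoField ω K a y i| ≤ 2 * K * A * dist x y := by
  have hxy : ∀ j, |x j - y j| ≤ dist x y := fun j => by
    simpa [Real.dist_eq] using dist_le_pi_dist x y j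
  have hsum := abs_div_mul_sum_le (m := A * (2 * dist x y))
    (x := fun j => a i j * (sin (x j - x i) - sin (y j - y i)))
    hK fun j => by
      rw [abs_mul]
      refine mul_le_mul (ha j) ?_ (abs_nonneg _) ((abs_nonneg _).trans (ha i))
      calc |sin (x j - x i) - sin (y j - y i)| ≤ |(x j - y j) - (x i - y i)| := by
            simpa only [sub_sub_sub_comm] using abs_sin_sub_sin_le _ _
        _ ≤ |x j - y j| + |x i - y i| := abs_sub _ _
        _ ≤ 2 * dist x y := by linarith [hxy i, hxy j]
  calc |kuramotoField ω K a x i - kuramotoField ω K a y i|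
      = |K / N * ∑ j, a i j * (sin (x j - x i) - sin (y j - y i))| := by
        congr 1; simp only [kuramotoField, mul_sub, Finset.sum_sub_distrib]; ring
    _ ≤ 2 * K * A * dist x y := by linarith

end KuramotoField

theorem intervalIntegrable_kuramotoField {N : ℕ} {ω : Fin N → ℝ} {K t₀ t₁ : ℝ}
    {a : ℝ → Fin N → Fin N → ℝ} {x : ℝ → Fin N → ℝ} (i : Fin N)
    (ha : ∀ j, IntervalIntegrable (fun s => a s i j) volume t₀ t₁)
    (hx : ContinuousOn x (uIcc t₀ t₁)) :
    IntervalIntegrable (fun s => kuramotoField ω K (a s) (x s) i) volume t₀ t₁ := by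
  have hxj : ∀ j, ContinuousOn (fun s => x s j) (uIcc t₀ t₁) := fun j =>
    (continuous_apply j).comp_continuousOn hx
  refine intervalIntegrable_const.add (IntervalIntegrable.const_mul ?_ _)
  simpa only [Finset.sum_fn] using IntervalIntegrable.sum Finset.univ
    (f := fun j s => a s i j * sin (x s j - x s i)) fun j _ =>
      (ha j).mul_continuousOn (continuous_sin.comp_continuousOn ((hxj j).sub (hxj i)))

theorem abs_integral_kuramotoField_state_sub_le {N : ℕ} [NeZero N] {ω : Fin N → ℝ} {K A t : ℝ}
    {a : ℝ → Fin N → Fin N → ℝ} {x y : ℝ → Fin N → ℝ} (i : Fin N) (hK : 0 ≤ K) (ht : 0 ≤ t)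
    (ha : ∀ j, IntervalIntegrable (fun s => a s i j) volume 0 t)
    (haA : ∀ s ∈ Icc 0 t, ∀ j, |a s i j| ≤ A)
    (hx : ContinuousOn x (uIcc 0 t)) (hy : ContinuousOn y (uIcc 0 t)) :
    |∫ s in 0..t, (kuramotoField ω K (a s) (x s) i - kuramotoField ω K (a s) (y s) i)| ≤
      2 * K * A * ∫ s in 0..t, dist (x s) (y s) := by
  have hdist : IntervalIntegrable (fun s => dist (x s) (y s)) volume 0 t :=
    (continuous_dist.comp_continuousOn (hx.prodMk hy)).intervalIntegrable
  have hdiff := (intervalIntegrable_kuramotoField (ω := ω) (K := K) i ha hx).sub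
    (intervalIntegrable_kuramotoField (ω := ω) (K := K) i ha hy)
  calc _ ≤ ∫ s in 0..t, |kuramotoField ω K (a s) (x s) i - kuramotoField ω K (a s) (y s) i| :=
        abs_integral_le_integral_abs ht
    _ ≤ ∫ s in 0..t, 2 * K * A * dist (x s) (y s) :=
        integral_mono_on ht hdiff.abs (hdist.const_mul _) fun s hs =>
          abs_kuramotoField_sub_le hK (haA s hs)
    _ = 2 * K * A * ∫ s in 0..t, dist (x s) (y s) := integral_const_mul _ _

theorem abs_integral_kuramotoField_coeff_sub_le {N : ℕ} [NeZero N] {ω : Fin N → ℝ} {K B δ t : ℝ}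
    {a : ℝ → Fin N → Fin N → ℝ} {c : Fin N → Fin N → ℝ} {x x' : ℝ → Fin N → ℝ} (i : Fin N)
    (hK : 0 ≤ K) (ht : 0 ≤ t)
    (ha : ∀ j, IntervalIntegrable (fun s => a s i j) volume 0 t)
    (hx : ∀ s ∈ Icc 0 t, ∀ j, HasDerivAt (fun s => x s j) (x' s j) s)
    (hx' : ∀ s ∈ Icc 0 t, ∀ j, |x' s j| ≤ B)
    (hδ : ∀ s ∈ Icc 0 t, ∀ j, |∫ u in 0..s, (a u i j - c i j)| ≤ δ) :
    |∫ s in 0..t, (kuramotoField ω K (a s) (x s) i - kuramotoField ω K c (x s) i)| ≤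
      K * (δ * (1 + 2 * B * t)) := by
  have ht₀ : (0 : ℝ) ∈ Icc 0 t := ⟨le_rfl, ht⟩
  have hδ₀ : 0 ≤ δ := by simpa using hδ 0 ht₀ i
  have hxc : ∀ j, ContinuousOn (fun s => x s j) (uIcc 0 t) := fun j s hs =>
    (hx s (by rwa [uIcc_of_le ht] at hs) j).continuousAt.continuousWithinAt
  have hint : ∀ j, IntervalIntegrable (fun s => (a s i j - c i j) * sin (x s j - x s i))
      volume 0 t := fun j =>
    ((ha j).sub intervalIntegrable_const).mul_continuousOn
      (continuous_sin.comp_continuousOn ((hxc j).sub (hxc i)))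
  have hosc : ∀ j, |∫ s in 0..t, (a s i j - c i j) * sin (x s j - x s i)| ≤
      δ * (1 + 2 * B * t) := by
    intro j
    have hg' : ∀ s ∈ Icc 0 t, |cos (x s j - x s i) * (x' s j - x' s i)| ≤ 2 * B := by
      intro s hs
      rw [abs_mul]
      calc |cos (x s j - x s i)| * |x' s j - x' s i| ≤ 1 * (B + B) :=
            mul_le_mul (abs_cos_le_one _)
              ((abs_sub _ _).trans (add_le_add (hx' s hs j) (hx' s hs i)))
              (abs_nonneg _) zero_le_one
        _ = 2 * B := by ring
    calc _ ≤ δ * (|sin (x t j - x t i)| + 2 * B * (t - 0)) :=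
          abs_integral_mul_le_of_abs_primitive_le ht ((ha j).sub intervalIntegrable_const)
            (fun s hs => ((hx s hs j).sub (hx s hs i)).sin) hg' fun s hs => hδ s hs j
      _ ≤ δ * (1 + 2 * B * t) := by
          rw [sub_zero]; gcongr; exact abs_sin_le_one _
  calc _ = |K / N * ∑ j, ∫ s in 0..t, (a s i j - c i j) * sin (x s j - x s i)| := by
        simp_rw [kuramotoField_sub_kuramotoField_left]
        rw [intervalIntegral.integral_const_mul, integral_finsetSum fun j _ => hint j]
    _ ≤ K * (δ * (1 + 2 * B * t)) := abs_div_mul_sum_le hK hosc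

theorem kuramoto_dist_le_add_mul_integral_dist {N : ℕ} [NeZero N] {ω α : Fin N → ℝ}
    {K A T δ : ℝ} {a : ℝ → Fin N → Fin N → ℝ} {c : Fin N → Fin N → ℝ} {φ ψ : ℝ → Fin N → ℝ}
    (hK : 0 ≤ K) (ha : ∀ i j, IntervalIntegrable (fun s => a s i j) volume 0 T)
    (haA : ∀ s ∈ Icc 0 T, ∀ i j, |a s i j| ≤ A) (hcA : ∀ i j, |c i j| ≤ A)
    (hφ : ContinuousOn φ (Icc 0 T))
    (hφeq : ∀ t ∈ Icc 0 T, ∀ i, φ t i = α i + ∫ s in 0..t, kuramotoField ω K (a s) (φ s) i)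
    (hψ0 : ψ 0 = α)
    (hψ : ∀ t ∈ Icc 0 T, ∀ i, HasDerivAt (fun s => ψ s i) (kuramotoField ω K c (ψ t) i) t)
    (hδ : ∀ t ∈ Icc 0 T, ∀ i j, |∫ s in 0..t, (a s i j - c i j)| ≤ δ) :
    ∀ t ∈ Icc 0 T, dist (φ t) (ψ t) ≤
      K * (δ * (1 + 2 * (‖ω‖ + K * A) * T)) + 2 * K * A * ∫ s in 0..t, dist (φ s) (ψ s) := by
  intro t ht
  have hsub : Icc 0 t ⊆ Icc 0 T := Icc_subset_Icc_right ht.2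
  have huIcc : uIcc 0 t = Icc 0 t := uIcc_of_le ht.1
  have hδ₀ : 0 ≤ δ := by simpa using hδ 0 ⟨le_rfl, ht.1.trans ht.2⟩ 0 0
  have hB : 0 ≤ ‖ω‖ + K * A :=
    add_nonneg (norm_nonneg _) (mul_nonneg hK ((abs_nonneg _).trans (hcA 0 0)))
  have hψc : ContinuousOn ψ (uIcc 0 t) := huIcc ▸ continuousOn_pi.2 fun i s hs =>
    (hψ s (hsub hs) i).continuousAt.continuousWithinAt
  have hφc : ContinuousOn φ (uIcc 0 t) := huIcc ▸ hφ.mono hsub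
  have hat : ∀ i j, IntervalIntegrable (fun s => a s i j) volume 0 t := fun i j =>
    (ha i j).mono_set (by rw [huIcc, uIcc_of_le (ht.1.trans ht.2)]; exact hsub)
  have hX := fun i => intervalIntegrable_kuramotoField (ω := ω) (K := K) i (hat i) hφc
  have hY := fun i => intervalIntegrable_kuramotoField (ω := ω) (K := K) i (hat i) hψc
  have hZ := fun i => intervalIntegrable_kuramotoField (ω := ω) (K := K) (a := fun _ => c) i
    (fun _ => intervalIntegrable_const) hψc
  refine dist_pi_le_iff'.2 fun i => ?_
  have hψeq : ψ t i = α i + ∫ s in 0..t, kuramotoField ω K c (ψ s) i := by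
    rw [integral_eq_sub_of_hasDerivAt (fun s hs => hψ s (hsub (huIcc ▸ hs)) i) (hZ i), hψ0]
    ring
  have hsplit : φ t i - ψ t i =
      (∫ s in 0..t, (kuramotoField ω K (a s) (φ s) i - kuramotoField ω K (a s) (ψ s) i)) +
        ∫ s in 0..t, (kuramotoField ω K (a s) (ψ s) i - kuramotoField ω K c (ψ s) i) := by
    rw [← integral_add ((hX i).sub (hY i)) ((hY i).sub (hZ i)), hφeq t ht i, hψeq]
    simp_rw [sub_add_sub_cancel]
    rw [integral_sub (hX i) (hZ i)]
    ring
  have hlip := abs_integral_kuramotoField_state_sub_le (ω := ω) i hK ht.1 (hat i)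
    (fun s hs j => haA s (hsub hs) i j) hφc hψc
  have hosc := abs_integral_kuramotoField_coeff_sub_le (ω := ω) i hK ht.1 (hat i)
    (fun s hs j => hψ s (hsub hs) j) (fun s _ j => abs_kuramotoField_le hK (hcA j))
    (fun s hs j => hδ s (hsub hs) i j)
  rw [Real.dist_eq, hsplit]
  calc _ ≤ _ := abs_add_le _ _
    _ ≤ 2 * K * A * (∫ s in 0..t, dist (φ s) (ψ s)) + K * (δ * (1 + 2 * (‖ω‖ + K * A) * T)) := by
        refine add_le_add hlip (hosc.trans ?_)
        gcongr
        exact ht.2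
    _ = _ := add_comm _ _

theorem kuramoto_dist_le {N : ℕ} [NeZero N] {ω α : Fin N → ℝ}
    {K A T δ : ℝ} {a : ℝ → Fin N → Fin N → ℝ} {c : Fin N → Fin N → ℝ} {φ ψ : ℝ → Fin N → ℝ}
    (hK : 0 ≤ K) (ha : ∀ i j, IntervalIntegrable (fun s => a s i j) volume 0 T)
    (haA : ∀ s ∈ Icc 0 T, ∀ i j, |a s i j| ≤ A) (hcA : ∀ i j, |c i j| ≤ A)
    (hφ : ContinuousOn φ (Icc 0 T))
    (hφeq : ∀ t ∈ Icc 0 T, ∀ i, φ t i = α i + ∫ s in 0..t, kuramotoField ω K (a s) (φ s) i)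
    (hψ0 : ψ 0 = α)
    (hψ : ∀ t ∈ Icc 0 T, ∀ i, HasDerivAt (fun s => ψ s i) (kuramotoField ω K c (ψ t) i) t)
    (hδ : ∀ t ∈ Icc 0 T, ∀ i j, |∫ s in 0..t, (a s i j - c i j)| ≤ δ) :
    ∀ t ∈ Icc 0 T, dist (φ t) (ψ t) ≤
      K * (1 + 2 * (‖ω‖ + K * A) * T) * exp (2 * K * A * T) * δ := by
  intro t ht
  have hA : 0 ≤ A := (abs_nonneg _).trans (hcA 0 0)
  have hδ₀ : 0 ≤ δ := by simpa using hδ 0 ⟨le_rfl, ht.1.trans ht.2⟩ 0 0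
  have hψc : ContinuousOn ψ (Icc 0 T) := continuousOn_pi.2 fun i s hs =>
    (hψ s hs i).continuousAt.continuousWithinAt
  have hgron := le_mul_exp_of_le_add_mul_integral
    (continuous_dist.comp_continuousOn (hφ.prodMk hψc)) (by positivity)
    (kuramoto_dist_le_add_mul_integral_dist hK ha haA hcA hφ hφeq hψ0 hψ hδ) t ht
  have hT : 0 ≤ T := ht.1.trans ht.2
  calc dist (φ t) (ψ t)
      ≤ K * (δ * (1 + 2 * (‖ω‖ + K * A) * T)) * exp (2 * K * A * (t - 0)) := hgron
    _ ≤ K * (δ * (1 + 2 * (‖ω‖ + K * A) * T)) * exp (2 * K * A * T) := by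
        rw [sub_zero]; gcongr; exact ht.2
    _ = K * (1 + 2 * (‖ω‖ + K * A) * T) * exp (2 * K * A * T) * δ := by ring

theorem kuramoto_averaging_principle_general
    (N : ℕ) (hN : 2 ≤ N) (K : ℝ) (hK : 0 < K) (A : ℝ)
    (ω : Fin N → ℝ) (T : ℝ) (hT : 0 < T)
    (abar : ℝ) (habar0 : 0 ≤ abar) (habarA : abar ≤ A)
    (α : Fin N → ℝ)
    (a : ℝ → ℝ → Fin N → Fin N → ℝ)
    (hmeas : ∀ ε : ℝ, 0 < ε → ∀ i j : Fin N, Measurable (fun t => a ε t i j))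
    (habd : ∀ ε : ℝ, 0 < ε → ∀ t ∈ Set.Icc (0:ℝ) T, ∀ i j : Fin N,
      0 ≤ a ε t i j ∧ a ε t i j ≤ A)
    (θ : ℝ → ℝ → Fin N → ℝ)
    (hcont : ∀ ε : ℝ, 0 < ε → ContinuousOn (fun t => θ ε t) (Set.Icc (0:ℝ) T))
    (hinteq : ∀ ε : ℝ, 0 < ε → ∀ t ∈ Set.Icc (0:ℝ) T, ∀ i : Fin N,
      θ ε t i = α i + ∫ s in (0:ℝ)..t,
        (ω i + (K / N) * ∑ j : Fin N, a ε s i j * Real.sin (θ ε s j - θ ε s i)))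
    (θbar : ℝ → Fin N → ℝ)
    (hbar0 : θbar 0 = α)
    (hbarode : ∀ t ∈ Set.Icc (0:ℝ) T, ∀ i : Fin N,
      HasDerivAt (fun s => θbar s i)
        (ω i + (K / N) * ∑ j : Fin N, abar * Real.sin (θbar t j - θbar t i)) t)
    (have_ : ∀ i j : Fin N, ∀ δ : ℝ, 0 < δ → ∃ ε₀ : ℝ, 0 < ε₀ ∧
      ∀ ε : ℝ, 0 < ε → ε < ε₀ → ∀ t ∈ Set.Icc (0:ℝ) T,
        |∫ s in (0:ℝ)..t, (a ε s i j - abar)| < δ) :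
    ∀ δ : ℝ, 0 < δ → ∃ ε₀ : ℝ, 0 < ε₀ ∧
      ∀ ε : ℝ, 0 < ε → ε < ε₀ → ∀ t ∈ Set.Icc (0:ℝ) T, ∀ i : Fin N,
        |θ ε t i - θbar t i| < δ := by
  intro δ hδ
  have : NeZero N := ⟨by omega⟩
  have hA : 0 ≤ A := habar0.trans habarA
  set C := K * (1 + 2 * (‖ω‖ + K * A) * T) * exp (2 * K * A * T)
  have hC : 0 ≤ C := by positivity
  have hδ₁ : 0 < δ / (C + 1) := by positivity
  have hsmall : ∀ᶠ ε in 𝓝[>] 0, ∀ i j, ∀ t ∈ Icc 0 T,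
      |∫ s in 0..t, (a ε s i j - abar)| < δ / (C + 1) := by
    simp only [eventually_all]
    intro i j
    obtain ⟨ε₀, hε₀, h⟩ := have_ i j _ hδ₁
    exact (nhdsGT_basis 0).eventually_iff.2 ⟨ε₀, hε₀, fun ε hε => h ε hε.1 hε.2⟩
  obtain ⟨ε₀, hε₀, hε₀small⟩ := (nhdsGT_basis 0).eventually_iff.1 hsmall
  refine ⟨ε₀, hε₀, fun ε hε hεε₀ t ht i => ?_⟩
  have habs : ∀ s ∈ Icc 0 T, ∀ i j, |a ε s i j| ≤ A := fun s hs i j =>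
    abs_le.2 ⟨by linarith [(habd ε hε s hs i j).1], (habd ε hε s hs i j).2⟩
  have hdist := kuramoto_dist_le (c := fun _ _ => abar) hK.le
    (fun i j => intervalIntegrable_of_abs_le hT.le (hmeas ε hε i j) fun s hs => habs s hs i j) habs
    (fun _ _ => by rwa [abs_of_nonneg habar0]) (hcont ε hε) (hinteq ε hε) hbar0 hbarode
    (fun t ht i j => (hε₀small ⟨hε, hεε₀⟩ i j t ht).le) t ht
  calc |θ ε t i - θbar t i| ≤ dist (θ ε t) (θbar t) := by
        simpa [Real.dist_eq] using dist_le_pi_dist (θ ε t) (θbar t) i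
    _ ≤ C * (δ / (C + 1)) := hdist
    _ < δ := by
        rw [mul_div_assoc', div_lt_iff₀ (by positivity)]
        nlinarith

/-- Deterministic averaging principle on a compact time interval: if the
time-averaged coefficients a^ε converge uniformly (in the integral sense) to
the constant ā as ε → 0⁺, then the solutions of the dynamic Kuramoto system
converge uniformly on [0,T] to the solution of the averaged all-to-all
Kuramoto system. -/
theorem kuramoto_averaging_principle
    (N : ℕ) (hN : 2 ≤ N) (K : ℝ) (hK : 0 < K) (A : ℝ) (hA : 0 < A)
    (ω : Fin N → ℝ) (T : ℝ) (hT : 0 < T)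
    (abar : ℝ) (habar0 : 0 ≤ abar) (habarA : abar ≤ A)
    (α : Fin N → ℝ)
    (a : ℝ → ℝ → Fin N → Fin N → ℝ)
    (hmeas : ∀ ε : ℝ, 0 < ε → ∀ i j : Fin N, Measurable (fun t => a ε t i j))
    (hasym : ∀ ε : ℝ, 0 < ε → ∀ t ∈ Set.Icc (0:ℝ) T, ∀ i j : Fin N,
      a ε t i j = a ε t j i)
    (habd : ∀ ε : ℝ, 0 < ε → ∀ t ∈ Set.Icc (0:ℝ) T, ∀ i j : Fin N,
      0 ≤ a ε t i j ∧ a ε t i j ≤ A)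
    (θ : ℝ → ℝ → Fin N → ℝ)
    (hcont : ∀ ε : ℝ, 0 < ε → ContinuousOn (fun t => θ ε t) (Set.Icc (0:ℝ) T))
    (hinteq : ∀ ε : ℝ, 0 < ε → ∀ t ∈ Set.Icc (0:ℝ) T, ∀ i : Fin N,
      θ ε t i = α i + ∫ s in (0:ℝ)..t,
        (ω i + (K / N) * ∑ j : Fin N, a ε s i j * Real.sin (θ ε s j - θ ε s i)))
    (θbar : ℝ → Fin N → ℝ)
    (hbar0 : θbar 0 = α)
    (hbarode : ∀ t ∈ Set.Icc (0:ℝ) T, ∀ i : Fin N,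
      HasDerivAt (fun s => θbar s i)
        (ω i + (K / N) * ∑ j : Fin N, abar * Real.sin (θbar t j - θbar t i)) t)
    (have_ : ∀ i j : Fin N, ∀ δ : ℝ, 0 < δ → ∃ ε₀ : ℝ, 0 < ε₀ ∧
      ∀ ε : ℝ, 0 < ε → ε < ε₀ → ∀ t ∈ Set.Icc (0:ℝ) T,
        |∫ s in (0:ℝ)..t, (a ε s i j - abar)| < δ) :
    ∀ δ : ℝ, 0 < δ → ∃ ε₀ : ℝ, 0 < ε₀ ∧
      ∀ ε : ℝ, 0 < ε → ε < ε₀ → ∀ t ∈ Set.Icc (0:ℝ) T, ∀ i : Fin N,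
        |θ ε t i - θbar t i| < δ :=
  kuramoto_averaging_principle_general N hN K hK A ω T hT abar habar0 habarA α a hmeas habd θ hcont
    hinteq θbar hbar0 hbarode have_
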